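/- Let f: [0,∞) → ℝ be Hölder-δ continuous on each [0,t] with constant C(t) ≤ c·t^ζ, where δ ∈ (0,1], ζ ∈ [0, δ/2), c > 0. Then for T > 0, sufficiently small ε > 0, all T̃ ∈ (T−ε, T+ε) and all t > 0: ∫₀ᵗ |f(s/T̃) − f(s/T)|² ds ≤ c'·t^{2ζ+2δ+1}·|T̃−T|^{2δ} for a constant c' independent of t and T̃; moreover with α := 2δ and β := 2(δ+ζ)+1, one has β < 1 + 3α/2. -/
import Mathlib

open intervalIntegral

private lemma sq_rpow (x a : ℝ) (hx : 0 ≤ x) : (x ^ a) ^ (2:ℕ) = x ^ (2 * a) := by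
  rw [← Real.rpow_natCast (x ^ a) 2, ← Real.rpow_mul hx]
  norm_num [mul_comm]

theorem stmt10 (f : ℝ → ℝ) (δ ζ c : ℝ)
    (hδ : δ ∈ Set.Ioc (0:ℝ) 1) (hζ : ζ ∈ Set.Ico (0:ℝ) (δ / 2)) (hc : 0 < c)
    (hHolder : ∀ t > (0:ℝ), ∀ x ∈ Set.Icc (0:ℝ) t, ∀ y ∈ Set.Icc (0:ℝ) t,
      |f x - f y| ≤ c * t ^ ζ * |x - y| ^ δ) :
    (∀ T > (0:ℝ), ∃ ε > (0:ℝ), ε < T ∧ ∃ c' > (0:ℝ),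
      ∀ T' ∈ Set.Ioo (T - ε) (T + ε), ∀ t > (0:ℝ),
        (∫ s in (0:ℝ)..t, |f (s / T') - f (s / T)| ^ 2) ≤
          c' * t ^ (2 * ζ + 2 * δ + 1) * |T' - T| ^ (2 * δ)) ∧
    2 * (δ + ζ) + 1 < 1 + 3 * (2 * δ) / 2 := by
  obtain ⟨hδ0, hδ1⟩ := hδ
  obtain ⟨hζ0, hζδ⟩ := hζ
  constructor
  · intro T hT
    refine ⟨T/2, by linarith, by linarith, c^2 * (2/T)^(2*ζ) * (2/T^2)^(2*δ), ?_, ?_⟩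
    · positivity
    · intro T' hT' t ht
      obtain ⟨hT'1, hT'2⟩ := hT'
      have hT'pos : 0 < T' := by linarith
      have hT2 : T/2 < T' := by linarith
      set V := |T' - T| with hV
      have hV0 : 0 ≤ V := abs_nonneg _
      -- pointwise bound
      have key : ∀ s ∈ Set.uIoc (0:ℝ) t,
          ‖|f (s / T') - f (s / T)| ^ 2‖ ≤
            (c * (2*t/T)^ζ * (2*t*V/T^2)^δ)^2 := by
        intro s hs
        rw [Set.uIoc_of_le ht.le] at hs
        obtain ⟨hs0, hst⟩ := hs
        have hmem : ∀ u : ℝ, 0 < u → T/2 < u → s / u ∈ Set.Icc (0:ℝ) (2*t/T) := by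
          intro u hu hu2
          constructor
          · positivity
          · rw [div_le_div_iff₀ hu (by positivity)]
            calc s * T ≤ t * T := by nlinarith
            _ ≤ 2 * t * u := by nlinarith
        have hB := hHolder (2*t/T) (by positivity) _ (hmem T' hT'pos hT2) _
          (hmem T hT (by linarith))
        have hdist : |s / T' - s / T| ≤ 2*t*V/T^2 := by
          have he : s / T' - s / T = s * (T - T') / (T' * T) := by
            field_simp
          rw [he, abs_div, abs_mul, abs_of_nonneg hs0.le,
            abs_of_pos (mul_pos hT'pos hT)]
          rw [div_le_div_iff₀ (mul_pos hT'pos hT) (by positivity)]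
          have : |T - T'| = V := by rw [hV, abs_sub_comm]
          rw [this]
          have h2 : s * T^2 ≤ 2 * t * (T' * T) := by
            nlinarith [mul_nonneg (sub_nonneg.2 hst) (sq_nonneg T),
              mul_nonneg (mul_nonneg ht.le (by linarith : (0:ℝ) ≤ 2*T' - T)) hT.le]
          nlinarith [mul_le_mul_of_nonneg_left h2 hV0]
        have hdist' : |s / T' - s / T| ^ δ ≤ (2*t*V/T^2) ^ δ :=
          Real.rpow_le_rpow (abs_nonneg _) hdist hδ0.le
        have hB2 : |f (s / T') - f (s / T)| ≤ c * (2*t/T)^ζ * (2*t*V/T^2)^δ := by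
          calc |f (s / T') - f (s / T)| ≤ c * (2*t/T)^ζ * |s / T' - s / T| ^ δ := hB
          _ ≤ c * (2*t/T)^ζ * (2*t*V/T^2)^δ := by
              apply mul_le_mul_of_nonneg_left hdist'
              positivity
        rw [Real.norm_eq_abs, abs_of_nonneg (by positivity)]
        exact pow_le_pow_left₀ (abs_nonneg _) hB2 2
      have hnorm := intervalIntegral.norm_integral_le_of_norm_le_const key
      have h1 : (∫ s in (0:ℝ)..t, |f (s / T') - f (s / T)| ^ 2) ≤
          (c * (2*t/T)^ζ * (2*t*V/T^2)^δ)^2 * |t - 0| :=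
        le_trans (le_abs_self _) hnorm
      rw [sub_zero, abs_of_pos ht] at h1
      refine h1.trans (le_of_eq ?_)
      -- algebraic identity
      have e1 : 2*t/T = (2/T)*t := by ring
      have e2 : 2*t*V/T^2 = (2/T^2)*(t*V) := by ring
      rw [e1, e2, Real.mul_rpow (by positivity) ht.le,
        Real.mul_rpow (by positivity) (by positivity),
        Real.mul_rpow ht.le hV0]
      rw [Real.rpow_add ht, Real.rpow_add ht, Real.rpow_one]
      simp only [mul_pow]
      rw [sq_rpow _ ζ (by positivity), sq_rpow _ ζ ht.le,
        sq_rpow _ δ (by positivity), sq_rpow _ δ ht.le, sq_rpow _ δ hV0]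
      ring
  · linarith
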